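/- Let g(u,v,w) = 4u³ − 54uv² + 27v²w and Φ(u,v,w) = 8·∂/∂w(log g) = 216v²/g. Then Φ satisfies the homaloidal PDE with respect to the linear form F = 8z, namely Φ = −8·∂/∂w(log Φ), as rational functions in (u,v,w). -/
import Mathlib


/-- `Φ(u,v,w) = 8·∂/∂w(log g) = 216v²/g` for `g = 4u³ − 54uv² + 27v²w`. -/
noncomputable def Phi6 (u v w : ℂ) : ℂ :=
  216 * v ^ 2 / (4 * u ^ 3 - 54 * u * v ^ 2 + 27 * v ^ 2 * w)

/-- `Φ = 8·∂/∂w(log g) = 216v²/g` satisfies the homaloidal PDE with respect to the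
linear form `F = 8z`, namely `Φ = −8·∂/∂w(log Φ)`, wherever `g` and `v` are nonzero. -/
theorem cuspidal_homaloidal (u v w : ℂ)
    (hg : 4 * u ^ 3 - 54 * u * v ^ 2 + 27 * v ^ 2 * w ≠ 0) (hv : v ≠ 0) :
    (8 * deriv (fun t => 4 * u ^ 3 - 54 * u * v ^ 2 + 27 * v ^ 2 * t) w /
        (4 * u ^ 3 - 54 * u * v ^ 2 + 27 * v ^ 2 * w) = Phi6 u v w) ∧
    Phi6 u v w = -8 * (deriv (fun t => Phi6 u v t) w / Phi6 u v w) := by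
  have hf : HasDerivAt (fun t : ℂ => 4 * u ^ 3 - 54 * u * v ^ 2 + 27 * v ^ 2 * t)
      (27 * v ^ 2) w := by
    simpa using ((hasDerivAt_id w).const_mul (27 * v ^ 2)).const_add
      (4 * u ^ 3 - 54 * u * v ^ 2)
  have hP : HasDerivAt (fun t : ℂ => Phi6 u v t)
      ((0 * (4 * u ^ 3 - 54 * u * v ^ 2 + 27 * v ^ 2 * w) - 216 * v ^ 2 * (27 * v ^ 2)) /
        (4 * u ^ 3 - 54 * u * v ^ 2 + 27 * v ^ 2 * w) ^ 2) w :=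
    (hasDerivAt_const w (216 * v ^ 2)).div hf hg
  have hPhi : Phi6 u v w ≠ 0 := by
    unfold Phi6
    exact div_ne_zero (by simpa using pow_ne_zero 2 hv) hg
  constructor
  · rw [hf.deriv]
    unfold Phi6
    ring_nf
  · rw [hP.deriv]
    unfold Phi6 at *
    field_simp
    ring
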